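/- Let c1, c2 be conjunctions over disjoint sets of l variables each (l even, 3 ≤ l ≤ n/2), with ρ = l/2, under the uniform distribution D on {0,1}^n. Then R_ρ^D(c1, c2) ≥ Pr_{x∼D}[(number of unsatisfied literals of c1 in x ≤ ρ) or (number of unsatisfied literals of c2 in x ≤ ρ)], and in particular R_ρ^D(c1, c2) is at least the probability that a Binomial(l, 1/2) random variable is at most l/2, which is at least 1/2. -/

import Mathlib

open MeasureTheory

/-- The conjunction over index set `I` with sign pattern `σ`. -/
def conjOf {n : ℕ} (I : Finset (Fin n)) (σ : Fin n → Bool) (x : Fin n → Bool) : Bool :=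
  decide (∀ i ∈ I, x i = σ i)

/-- Number of unsatisfied literals of the conjunction `(I, σ)` in the point `x`. -/
def unsatCount {n : ℕ} (I : Finset (Fin n)) (σ : Fin n → Bool) (x : Fin n → Bool) : ℕ :=
  (I.filter fun i => x i ≠ σ i).card

/-! Setting the at most `ρ` unsatisfied literals of one conjunction right moves `x` by at most `ρ`
and, the index sets being disjoint, leaves the other conjunction untouched; so near `x` the two
conjunctions disagree, except when both already hold at `x`, and then flipping a single literal
of `c1` separates them. Flipping every coordinate of `I1` is an involution of the cube that maps
points with more than `l / 2` unsatisfied literals of `c1` to points with at most `l / 2`, so the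
latter have probability at least `1 / 2`. -/

section

open Finset Function

lemma card_le_two_mul_card_filter_of_injective {α : Type*} [Fintype α] (p : α → Prop)
    [DecidablePred p] {f : α → α} (hf : Injective f) (hp : ∀ x, ¬ p x → p (f x)) :
    Fintype.card α ≤ 2 * #{x | p x} := by
  have hnot : #{x | ¬ p x} ≤ #{x | p x} :=
    card_le_card_of_injOn f (fun x hx => by simp_all) hf.injOn
  have hsplit : #{x | p x} + #{x | ¬ p x} = Fintype.card α :=
    card_filter_add_card_filter_not _
  omega

lemma half_le_toMeasure_uniformOfFintype {α : Type*} [Fintype α] [Nonempty α]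
    [MeasurableSpace α] [MeasurableSingletonClass α] {s : Set α} {f : α → α}
    (hf : Injective f) (hs : Set.MapsTo f sᶜ s) :
    1 / 2 ≤ (PMF.uniformOfFintype α).toMeasure s := by
  classical
  have hcard := card_le_two_mul_card_filter_of_injective (· ∈ s) hf hs
  rw [PMF.toMeasure_uniformOfFintype_apply s s.toFinite.measurableSet,
    Fintype.card_subtype, ENNReal.le_div_iff_mul_le (by simp) (by simp), one_div, mul_comm,
    ← div_eq_mul_inv]
  exact ENNReal.div_le_of_le_mul' (mod_cast hcard)

variable {n : ℕ} {I J : Finset (Fin n)} {σ τ : Fin n → Bool} {x : Fin n → Bool}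

lemma conjOf_congr {y : Fin n → Bool} (h : ∀ i ∈ I, x i = y i) :
    conjOf I σ x = conjOf I σ y := by
  simp only [conjOf, decide_eq_decide]
  exact forall₂_congr fun i hi => by rw [h i hi]

lemma conjOf_piecewise_self : conjOf I σ (I.piecewise σ x) = true := by
  simp +contextual [conjOf, piecewise_eq_of_mem]

lemma conjOf_piecewise_of_disjoint (hIJ : Disjoint I J) (y : Fin n → Bool) :
    conjOf J τ (I.piecewise y x) = conjOf J τ x :=
  conjOf_congr fun _ hj => piecewise_eq_of_notMem _ _ _ (disjoint_right.mp hIJ hj)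

lemma hammingDist_piecewise_self : hammingDist x (I.piecewise σ x) = unsatCount I σ x := by
  rw [hammingDist, unsatCount]
  congr 1
  ext i
  by_cases hi : i ∈ I <;> simp [hi, eq_comm]

lemma conjOf_update_of_notMem {i : Fin n} (hi : i ∉ I) (b : Bool) :
    conjOf I σ (update x i b) = conjOf I σ x :=
  conjOf_congr fun _ hj => update_of_ne (ne_of_mem_of_not_mem hj hi) _ _

lemma conjOf_update_not_self {i : Fin n} (hi : i ∈ I) :
    conjOf I σ (update x i (!σ i)) = false := by
  simpa [conjOf] using ⟨i, hi, by simp⟩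

lemma hammingDist_update_le_one (i : Fin n) (b : Bool) : hammingDist x (update x i b) ≤ 1 := by
  refine (card_le_card fun j hj => ?_).trans (card_singleton i).le
  by_contra hji
  simp_all

lemma unsatCount_piecewise_not_add :
    unsatCount I σ (I.piecewise (fun i => !x i) x) + unsatCount I σ x = #I := by
  have hflip : unsatCount I σ (I.piecewise (fun i => !x i) x) = #{i ∈ I | ¬ x i ≠ σ i} := by
    refine congrArg card (filter_congr fun i hi => ?_)
    rw [piecewise_eq_of_mem _ _ _ hi]
    cases x i <;> cases σ i <;> decide
  rw [hflip, add_comm]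
  exact card_filter_add_card_filter_not _

lemma half_le_toMeasure_unsatCount_le :
    1 / 2 ≤ (PMF.uniformOfFintype (Fin n → Bool)).toMeasure {x | unsatCount I σ x ≤ #I / 2} := by
  have hflip : Involutive fun x : Fin n → Bool => I.piecewise (fun i => !x i) x := fun x => by
    ext i
    by_cases hi : i ∈ I <;> simp [hi]
  refine half_le_toMeasure_uniformOfFintype hflip.injective fun x hx => ?_
  have := unsatCount_piecewise_not_add (I := I) (σ := σ) (x := x)
  simp only [Set.mem_compl_iff, Set.mem_ofPred_eq, not_le] at hx ⊢
  omega

lemma exists_hammingDist_le_conjOf_ne {ρ : ℕ} {i : Fin n} (hIJ : Disjoint I J) (hi : i ∈ I)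
    (hρ : 1 ≤ ρ) (h : unsatCount I σ x ≤ ρ ∨ unsatCount J τ x ≤ ρ) :
    ∃ z, hammingDist x z ≤ ρ ∧ conjOf I σ z ≠ conjOf J τ z := by
  by_cases hne : conjOf I σ x ≠ conjOf J τ x
  · exact ⟨x, by simp, hne⟩
  rw [not_ne_iff] at hne
  cases hx : conjOf J τ x
  · rcases h with h | h
    · refine ⟨I.piecewise σ x, hammingDist_piecewise_self.le.trans h, ?_⟩
      simp [conjOf_piecewise_self, conjOf_piecewise_of_disjoint hIJ, hx]
    · refine ⟨J.piecewise τ x, hammingDist_piecewise_self.le.trans h, ?_⟩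
      simp [conjOf_piecewise_self, conjOf_piecewise_of_disjoint hIJ.symm, hne, hx]
  · refine ⟨update x i (!σ i), (hammingDist_update_le_one i _).trans hρ, ?_⟩
    simp [conjOf_update_not_self hi, conjOf_update_of_notMem (disjoint_left.mp hIJ hi), hx]

end

theorem robust_risk_disjoint_conjunctions_general {n l : ℕ} (hl3 : 3 ≤ l)
    (I1 I2 : Finset (Fin n)) (hdisj : Disjoint I1 I2)
    (hI1 : I1.card = l) (σ1 σ2 : Fin n → Bool) :
    (PMF.uniformOfFintype (Fin n → Bool)).toMeasure
        {x | unsatCount I1 σ1 x ≤ l / 2 ∨ unsatCount I2 σ2 x ≤ l / 2} ≤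
      (PMF.uniformOfFintype (Fin n → Bool)).toMeasure
        {x | ∃ z : Fin n → Bool, hammingDist x z ≤ l / 2 ∧ conjOf I1 σ1 z ≠ conjOf I2 σ2 z} ∧
    (1 : ENNReal) / 2 ≤
      (PMF.uniformOfFintype (Fin n → Bool)).toMeasure
        {x | ∃ z : Fin n → Bool, hammingDist x z ≤ l / 2 ∧ conjOf I1 σ1 z ≠ conjOf I2 σ2 z} := by
  obtain ⟨i, hi⟩ : I1.Nonempty := Finset.card_pos.mp (by omega)
  have hsub : {x | unsatCount I1 σ1 x ≤ l / 2 ∨ unsatCount I2 σ2 x ≤ l / 2} ⊆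
      {x | ∃ z : Fin n → Bool, hammingDist x z ≤ l / 2 ∧ conjOf I1 σ1 z ≠ conjOf I2 σ2 z} :=
    fun x hx => exists_hammingDist_le_conjOf_ne hdisj hi (by omega) hx
  refine ⟨measure_mono hsub, ?_⟩
  calc (1 : ENNReal) / 2
      ≤ (PMF.uniformOfFintype (Fin n → Bool)).toMeasure
          {x | unsatCount I1 σ1 x ≤ I1.card / 2} := half_le_toMeasure_unsatCount_le
    _ ≤ _ := measure_mono fun x hx => hsub (Or.inl (hI1 ▸ hx))

/-- For disjoint conjunctions `c1, c2` of length `l` (l even, `3 ≤ l ≤ n/2`) and `ρ = l/2`,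
under the uniform distribution the robust risk is at least the probability that `c1` or
`c2` has at most `ρ` unsatisfied literals, and in particular at least `1/2`. -/
theorem robust_risk_disjoint_conjunctions {n l : ℕ} (hl3 : 3 ≤ l) (hle : Even l)
    (hn : 2 * l ≤ n) (I1 I2 : Finset (Fin n)) (hdisj : Disjoint I1 I2)
    (hI1 : I1.card = l) (hI2 : I2.card = l) (σ1 σ2 : Fin n → Bool) :
    (PMF.uniformOfFintype (Fin n → Bool)).toMeasure
        {x | unsatCount I1 σ1 x ≤ l / 2 ∨ unsatCount I2 σ2 x ≤ l / 2} ≤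
      (PMF.uniformOfFintype (Fin n → Bool)).toMeasure
        {x | ∃ z : Fin n → Bool, hammingDist x z ≤ l / 2 ∧ conjOf I1 σ1 z ≠ conjOf I2 σ2 z} ∧
    (1 : ENNReal) / 2 ≤
      (PMF.uniformOfFintype (Fin n → Bool)).toMeasure
        {x | ∃ z : Fin n → Bool, hammingDist x z ≤ l / 2 ∧ conjOf I1 σ1 z ≠ conjOf I2 σ2 z} :=
  robust_risk_disjoint_conjunctions_general hl3 I1 I2 hdisj hI1 σ1 σ2
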